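/- arXiv:1611.05658 — 4 statements merged into one kernel-verified Lean document; each statement's English description precedes it below -/
import Mathlib

section
/- Let V be a finite-dimensional real vector space and let W be a finite group acting on V by linear automorphisms. For v ∈ V write Π_v := convexHull(W • v) for the convex hull of the W-orbit of v. Let x ∈ V, let f be a nonempty exposed face of Π_x, and suppose y ∈ f and z ∈ Π_x satisfy y ∈ Π_z. Then there exists σ ∈ W such that σ • z ∈ f. -/
open Set MulAction

theorem IsExposed.exists_mem_of_mem_convexHull {𝕜 E : Type*} [TopologicalSpace 𝕜] [Ring 𝕜]
    [LinearOrder 𝕜] [IsStrictOrderedRing 𝕜] [AddCommGroup E] [Module 𝕜 E] [TopologicalSpace E]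
    {A B s : Set E} (hAB : IsExposed 𝕜 A B) (hsA : s ⊆ A) {y : E} (hyB : y ∈ B)
    (hys : y ∈ convexHull 𝕜 s) : ∃ a ∈ s, a ∈ B := by
  obtain ⟨l, rfl⟩ := hAB ⟨y, hyB⟩
  by_contra! hsB
  -- Points of `s` maximizing `l` would lie in the face, so `s` sits in the open half-space.
  have hs_lt : s ⊆ {v | l v < l y} := fun a ha =>
    (hyB.2 a (hsA ha)).lt_of_ne fun hay => hsB a ha ⟨hsA ha, fun b hb => hay ▸ hyB.2 b hb⟩
  have hy_lt : l y < l y := convexHull_min hs_lt (convex_halfSpace_lt l.isLinear (l y)) hys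
  exact hy_lt.false

theorem smul_mem_convexHull_orbit {𝕜 V M : Type*} [Semiring 𝕜] [PartialOrder 𝕜]
    [AddCommMonoid V] [Module 𝕜 V] [Monoid M] [DistribMulAction M V] [SMulCommClass M 𝕜 V]
    (σ : M) {x z : V} (hz : z ∈ convexHull 𝕜 (orbit M x)) :
    σ • z ∈ convexHull 𝕜 (orbit M x) := by
  let g := DistribSMul.toLinearMap 𝕜 V σ
  have hg_orbit : g '' orbit M x ⊆ orbit M x := by
    rintro _ ⟨_, ⟨τ, rfl⟩, rfl⟩
    exact ⟨σ * τ, mul_smul σ τ x⟩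
  have hgz : g z ∈ convexHull 𝕜 (g '' orbit M x) := g.image_convexHull _ ▸ mem_image_of_mem g hz
  exact convexHull_mono hg_orbit hgz

theorem exists_smul_mem_of_mem_exposed_face_general
    {V : Type*} [AddCommGroup V] [Module ℝ V] [TopologicalSpace V]
    {W : Type*} [Group W] [DistribMulAction W V] [SMulCommClass W ℝ V]
    (x : V) (f : Set V)
    (hf : IsExposed ℝ (convexHull ℝ (MulAction.orbit W x)) f)
    (y z : V) (hy : y ∈ f)
    (hz : z ∈ convexHull ℝ (MulAction.orbit W x))
    (hyz : y ∈ convexHull ℝ (MulAction.orbit W z)) :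
    ∃ σ : W, σ • z ∈ f := by
  have horbit : orbit W z ⊆ convexHull ℝ (orbit W x) := by
    rintro _ ⟨σ, rfl⟩
    exact smul_mem_convexHull_orbit σ hz
  obtain ⟨_, ⟨σ, rfl⟩, hσz⟩ := hf.exists_mem_of_mem_convexHull horbit hy hyz
  exact ⟨σ, hσz⟩

/-- Let `V` be a finite-dimensional real vector space and `W` a finite group
acting on `V` by linear automorphisms. For `v ∈ V` let `Π_v` be the convex hull of the
`W`-orbit of `v`. If `f` is a nonempty exposed face of `Π_x`, `y ∈ f`, `z ∈ Π_x` and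
`y ∈ Π_z`, then there exists `σ ∈ W` with `σ • z ∈ f`. -/
theorem exists_smul_mem_of_mem_exposed_face
    {V : Type*} [AddCommGroup V] [Module ℝ V] [FiniteDimensional ℝ V]
    [TopologicalSpace V] [IsTopologicalAddGroup V] [ContinuousSMul ℝ V]
    {W : Type*} [Group W] [Fintype W] [DistribMulAction W V] [SMulCommClass W ℝ V]
    (x : V) (f : Set V)
    (hf : IsExposed ℝ (convexHull ℝ (MulAction.orbit W x)) f)
    (hfne : f.Nonempty)
    (y z : V) (hy : y ∈ f)
    (hz : z ∈ convexHull ℝ (MulAction.orbit W x))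
    (hyz : y ∈ convexHull ℝ (MulAction.orbit W z)) :
    ∃ σ : W, σ • z ∈ f :=
  exists_smul_mem_of_mem_exposed_face_general x f hf y z hy hz hyz
end

section
/- Let X and Y be real symmetric n×n matrices. Then Y lies in convexHull{g X gᵀ : g ∈ O(n)} if and only if tr Y = tr X and, for every p = 1, …, n, the sum of the p largest eigenvalues of Y (with multiplicity) is at most the sum of the p largest eigenvalues of X. -/
/-!
Both conditions are tested against linear functionals. Orthogonal conjugation preserves the trace,
and for a `p`-subset `s` of eigenvectors `v_j` of `Y` the functional `M ↦ ∑ j ∈ s, v_jᵀ M v_j`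
is at most the sum of the `p` largest eigenvalues of `X` on the orbit of `X` (Ky Fan: it is an
average of eigenvalues of `X` with weights in `[0, 1]` of total mass `p`), while on `Y` it equals
the sum of the `p` largest eigenvalues of `Y`. Conversely, diagonalising `Y = V diag(μ) Vᵀ`,
majorization of `μ` by the eigenvalues `λ` of `X` puts `μ` in the convex hull of the permutations
of `λ` (Hardy–Littlewood–Pólya), and `V diag(λ ∘ σ) Vᵀ` lies in the orbit of `X`.
-/

open Matrix

/-- The sum of the `p` largest values of `f` (with multiplicity): the supremum of all sums of
`f` over `p`-element subsets of the index set. -/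
noncomputable def sumLargest {ι : Type*} [Fintype ι] (f : ι → ℝ) (p : ℕ) : ℝ :=
  sSup {x : ℝ | ∃ s : Finset ι, s.card = p ∧ x = ∑ i ∈ s, f i}

open Finset

section SumLargest

variable {ι : Type*} [Fintype ι] {f : ι → ℝ} {p : ℕ}

lemma bddAbove_sumLargest_set (f : ι → ℝ) (p : ℕ) :
    BddAbove {x : ℝ | ∃ s : Finset ι, #s = p ∧ x = ∑ i ∈ s, f i} := by
  refine ((univ.powersetCard p).image fun s => ∑ i ∈ s, f i).bddAbove.mono ?_
  rintro _ ⟨s, hs, rfl⟩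
  simp only [coe_image, Set.mem_image, mem_coe, mem_powersetCard_univ]
  exact ⟨s, hs, rfl⟩

lemma sum_le_sumLargest {s : Finset ι} (hs : #s = p) : ∑ i ∈ s, f i ≤ sumLargest f p :=
  le_csSup (bddAbove_sumLargest_set f p) ⟨s, hs, rfl⟩

lemma exists_threshold_of_forall_le {s : Finset ι} (h : ∀ i ∈ s, ∀ j ∉ s, f j ≤ f i) :
    ∃ m, (∀ i ∈ s, m ≤ f i) ∧ ∀ j ∉ s, f j ≤ m := by
  rcases s.eq_empty_or_nonempty with rfl | hs
  · obtain ⟨M, hM⟩ := (Set.finite_range f).bddAbove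
    exact ⟨M, by simp, fun j _ => hM ⟨j, rfl⟩⟩
  · obtain ⟨i₀, hi₀, hmin⟩ := s.exists_min_image f hs
    exact ⟨f i₀, hmin, fun j hj => h i₀ hi₀ j hj⟩

lemma sum_mul_le_sum_of_forall_le {s : Finset ι}
    (h : ∀ i ∈ s, ∀ j ∉ s, f j ≤ f i) {w : ι → ℝ} (hw₀ : ∀ i, 0 ≤ w i) (hw₁ : ∀ i, w i ≤ 1)
    (hw : ∑ i, w i = #s) :
    ∑ i, w i * f i ≤ ∑ i ∈ s, f i := by
  classical
  obtain ⟨m, hm_le, hle_m⟩ := exists_threshold_of_forall_le h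
  set e : ι → ℝ := fun i => if i ∈ s then 1 else 0
  -- each term is `≤ 0`: on `s` both `w - 1 ≤ 0 ≤ f - m`, off `s` both `f - m ≤ 0 ≤ w`
  have hterm : ∀ i, (w i - e i) * (f i - m) ≤ 0 := by
    intro i
    by_cases hi : i ∈ s
    · simp only [e, if_pos hi]
      exact mul_nonpos_of_nonpos_of_nonneg (by linarith [hw₁ i]) (by linarith [hm_le i hi])
    · simp only [e, if_neg hi, sub_zero]
      exact mul_nonpos_of_nonneg_of_nonpos (hw₀ i) (by linarith [hle_m i hi])
  have he : ∑ i, e i = #s := by simp [e]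
  have hef : ∑ i, e i * f i = ∑ i ∈ s, f i := by simp [e]
  have key : ∑ i, (w i - e i) * (f i - m) = ∑ i, w i * f i - ∑ i ∈ s, f i := by
    simp only [sub_mul, mul_sub, sum_sub_distrib, ← sum_mul, hw, he, hef]
    ring
  linarith [sum_nonpos fun i (_ : i ∈ univ) => hterm i]

lemma sumLargest_eq_sum_of_forall_le {s : Finset ι} (h : ∀ i ∈ s, ∀ j ∉ s, f j ≤ f i) :
    sumLargest f #s = ∑ i ∈ s, f i := by
  classical
  refine le_antisymm (csSup_le ⟨_, s, rfl, rfl⟩ ?_) (sum_le_sumLargest rfl)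
  rintro _ ⟨t, ht, rfl⟩
  have hind := sum_mul_le_sum_of_forall_le h (w := fun i => if i ∈ t then 1 else 0)
    (fun i => by positivity) (fun i => by split_ifs <;> norm_num) (by simp [ht])
  simpa using hind

/-- Take a `p`-subset of maximal sum: swapping in a larger value from outside would increase it. -/
lemma exists_card_eq_forall_le (f : ι → ℝ) (hp : p ≤ Fintype.card ι) :
    ∃ s : Finset ι, #s = p ∧ ∀ i ∈ s, ∀ j ∉ s, f j ≤ f i := by
  classical
  obtain ⟨s, hs, hmax⟩ := (univ.powersetCard p).exists_max_image (fun s => ∑ i ∈ s, f i)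
    (powersetCard_nonempty.mpr (by simpa using hp))
  rw [mem_powersetCard_univ] at hs
  refine ⟨s, hs, fun i hi j hj => ?_⟩
  have hj' : j ∉ s.erase i := fun h => hj (mem_of_mem_erase h)
  have hswap := hmax (insert j (s.erase i)) (by
    rw [mem_powersetCard_univ, card_insert_of_notMem hj', card_erase_of_mem hi, hs]
    have := card_pos.mpr ⟨i, hi⟩
    omega)
  rw [sum_insert hj', sum_erase_eq_sub hi] at hswap
  linarith

lemma exists_sumLargest_eq_sum (f : ι → ℝ) (hp : p ≤ Fintype.card ι) :
    ∃ s : Finset ι, #s = p ∧ sumLargest f p = ∑ i ∈ s, f i := by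
  obtain ⟨s, rfl, hs⟩ := exists_card_eq_forall_le f hp
  exact ⟨s, rfl, sumLargest_eq_sum_of_forall_le hs⟩

lemma sum_mul_le_sumLargest {w : ι → ℝ} (hw₀ : ∀ i, 0 ≤ w i) (hw₁ : ∀ i, w i ≤ 1)
    (hw : ∑ i, w i = p) :
    ∑ i, w i * f i ≤ sumLargest f p := by
  have hp : p ≤ Fintype.card ι := by
    have : ∑ i, w i ≤ ∑ _i : ι, (1 : ℝ) := sum_le_sum fun i _ => hw₁ i
    simp only [hw, sum_const, card_univ, nsmul_eq_mul, mul_one] at this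
    exact_mod_cast this
  obtain ⟨s, rfl, hs⟩ := exists_card_eq_forall_le f hp
  rw [sumLargest_eq_sum_of_forall_le hs]
  exact sum_mul_le_sum_of_forall_le hs hw₀ hw₁ hw

lemma sumLargest_comp_equiv (f : ι → ℝ) (e : ι ≃ ι) (p : ℕ) :
    sumLargest (f ∘ e) p = sumLargest f p := by
  unfold sumLargest
  congr 1
  ext x
  constructor
  · rintro ⟨s, hs, rfl⟩
    exact ⟨s.map e.toEmbedding, by simp [hs], by simp [sum_map]⟩
  · rintro ⟨s, hs, rfl⟩
    exact ⟨s.map e.symm.toEmbedding, by simp [hs], by simp [sum_map]⟩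

end SumLargest

lemma Antitone.sumLargest_eq {n p : ℕ} {x : Fin n → ℝ} (hx : Antitone x) (hp : p ≤ n) :
    sumLargest x p = ∑ j : Fin p, x (Fin.castLE hp j) := by
  have hs : #(univ.map (Fin.castLEEmb hp)) = p := by simp
  conv_lhs => rw [← hs]
  rw [sumLargest_eq_sum_of_forall_le, sum_map]
  · rfl
  intro i hi j hj
  simp only [mem_map, mem_univ, true_and, Fin.castLEEmb_apply] at hi hj
  obtain ⟨k, rfl⟩ := hi
  refine hx (Fin.le_def.mpr ?_)
  by_contra! hlt
  exact hj ⟨⟨j, hlt.trans k.2⟩, rfl⟩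

lemma exists_perm_antitone {n : ℕ} (x : Fin n → ℝ) :
    ∃ σ : Equiv.Perm (Fin n), Antitone (x ∘ σ) :=
  ⟨Fin.revPerm.trans (Tuple.sort x), fun _ _ hkl =>
    Tuple.monotone_sort x (Fin.rev_le_rev.mpr hkl)⟩

/-- Abel summation. -/
lemma sum_mul_le_mul_sum_of_monotone :
    ∀ {n : ℕ} {a d : Fin n → ℝ} {M : ℝ}, Monotone a → (∀ k, a k ≤ M) →
    (∀ (p : ℕ) (hp : p ≤ n), 0 ≤ ∑ j : Fin p, d (Fin.castLE hp j)) →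
    ∑ k, a k * d k ≤ M * ∑ k, d k
  | 0, _, _, _, _, _, _ => by simp
  | n + 1, a, d, M, ha, haM, hd => by
    have ih := sum_mul_le_mul_sum_of_monotone (a := a ∘ Fin.castSucc) (d := d ∘ Fin.castSucc)
      (M := a (Fin.last n)) (ha.comp Fin.strictMono_castSucc.monotone)
      (fun k => ha (Fin.castSucc_lt_last k).le)
      (fun p hp => hd p (by omega))
    have htotal : 0 ≤ ∑ k : Fin n, d k.castSucc + d (Fin.last n) := by
      simpa [Fin.sum_univ_castSucc] using hd (n + 1) le_rfl
    rw [Fin.sum_univ_castSucc, Fin.sum_univ_castSucc]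
    calc ∑ k : Fin n, a k.castSucc * d k.castSucc + a (Fin.last n) * d (Fin.last n)
        ≤ a (Fin.last n) * (∑ k : Fin n, d k.castSucc + d (Fin.last n)) := by
          rw [mul_add]; exact add_le_add_left ih _
      _ ≤ M * (∑ k : Fin n, d k.castSucc + d (Fin.last n)) :=
          mul_le_mul_of_nonneg_right (haM _) htotal

lemma prefix_sum_eq_sumLargest {n p : ℕ} {x : Fin n → ℝ} {σ : Equiv.Perm (Fin n)}
    (hσ : Antitone (x ∘ σ)) (hp : p ≤ n) :
    ∑ j : Fin p, x (σ (Fin.castLE hp j)) = sumLargest x p := by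
  rw [← sumLargest_comp_equiv x σ, hσ.sumLargest_eq hp]
  rfl

/-- Sort `c` increasingly and `μ`, `lam` decreasingly: Abel summation against the differences of
the partial sums, then the rearrangement inequality, compare the pairings. -/
lemma exists_perm_sum_mul_le {n : ℕ} (c μ lam : Fin n → ℝ) (hsum : ∑ i, μ i = ∑ i, lam i)
    (hmaj : ∀ p : ℕ, 1 ≤ p → p ≤ n → sumLargest μ p ≤ sumLargest lam p) :
    ∃ σ : Equiv.Perm (Fin n), ∑ i, c i * lam (σ i) ≤ ∑ i, c i * μ i := by
  obtain ⟨π, hπ⟩ : ∃ π : Equiv.Perm (Fin n), Monotone (c ∘ π) :=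
    ⟨Tuple.sort c, Tuple.monotone_sort c⟩
  obtain ⟨ρ, hρ⟩ := exists_perm_antitone μ
  obtain ⟨τ, hτ⟩ := exists_perm_antitone lam
  obtain ⟨M, hM⟩ := (Set.finite_range (c ∘ π)).bddAbove
  have hprefix : ∀ (p : ℕ) (hp : p ≤ n),
      0 ≤ ∑ j : Fin p, (lam (τ (Fin.castLE hp j)) - μ (ρ (Fin.castLE hp j))) := by
    intro p hp
    rw [sum_sub_distrib, prefix_sum_eq_sumLargest hτ, prefix_sum_eq_sumLargest hρ, sub_nonneg]
    rcases Nat.eq_zero_or_pos p with rfl | hp₀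
    · simp [sumLargest]
    · exact hmaj p hp₀ hp
  have htotal : ∑ k, (lam (τ k) - μ (ρ k)) = 0 := by
    rw [sum_sub_distrib, Equiv.sum_comp τ lam, Equiv.sum_comp ρ μ, hsum, sub_self]
  have habel := sum_mul_le_mul_sum_of_monotone (d := fun k => lam (τ k) - μ (ρ k)) hπ
    (fun k => hM ⟨k, rfl⟩) hprefix
  rw [htotal, mul_zero] at habel
  refine ⟨π.symm.trans τ, ?_⟩
  calc ∑ i, c i * lam ((π.symm.trans τ) i)
      = ∑ k, c (π k) * lam (τ k) := by
        rw [← Equiv.sum_comp π]; simp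
    _ ≤ ∑ k, c (π k) * μ (ρ k) := by
        simp only [Function.comp_apply, mul_sub, sum_sub_distrib] at habel
        linarith
    _ ≤ ∑ k, c (π k) * μ (ρ ((π.trans ρ.symm) k)) :=
        (hπ.antivary hρ).sum_mul_le_sum_mul_comp_perm
    _ = ∑ i, c i * μ i := by
        simp only [Equiv.trans_apply, Equiv.apply_symm_apply]
        exact Equiv.sum_comp π fun i => c i * μ i

/-- Hardy–Littlewood–Pólya, by separating `μ` from the permutohedron of `lam` with a linear
functional. -/
lemma mem_convexHull_perm_of_majorized {n : ℕ} {μ lam : Fin n → ℝ}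
    (hsum : ∑ i, μ i = ∑ i, lam i)
    (hmaj : ∀ p : ℕ, 1 ≤ p → p ≤ n → sumLargest μ p ≤ sumLargest lam p) :
    μ ∈ convexHull ℝ (Set.range fun σ : Equiv.Perm (Fin n) => lam ∘ σ) := by
  by_contra hμ
  obtain ⟨f, u, hfμ, hfu⟩ := geometric_hahn_banach_point_closed (convex_convexHull ℝ _)
    ((Set.finite_range _).isClosed_convexHull ℝ) hμ
  have hf : ∀ x : Fin n → ℝ, f x = ∑ i, f (Pi.single i 1) * x i := fun x => by
    conv_lhs => rw [← univ_sum_single x]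
    rw [map_sum]
    refine sum_congr rfl fun i _ => ?_
    rw [mul_comm, ← smul_eq_mul, ← map_smul, ← Pi.single_smul, smul_eq_mul, mul_one]
  obtain ⟨σ, hσ⟩ := exists_perm_sum_mul_le (fun i => f (Pi.single i 1)) μ lam hsum hmaj
  have := hfu _ (subset_convexHull ℝ _ ⟨σ, rfl⟩)
  rw [hf] at this hfμ
  exact absurd (hfμ.trans this) (not_lt.mpr hσ)

namespace Matrix

variable {ι : Type*} [Fintype ι] [DecidableEq ι]

lemma transpose_mem_orthogonalGroup {A : Matrix ι ι ℝ} (hA : A ∈ orthogonalGroup ι ℝ) :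
    Aᵀ ∈ orthogonalGroup ι ℝ := by
  rw [mem_orthogonalGroup_iff, transpose_transpose]
  exact (mem_orthogonalGroup_iff' ι ℝ).mp hA

lemma transpose_mul_cancel_left {A : Matrix ι ι ℝ} (hA : A ∈ orthogonalGroup ι ℝ)
    (M : Matrix ι ι ℝ) :
    Aᵀ * (A * M) = M := by
  rw [← Matrix.mul_assoc, (mem_orthogonalGroup_iff' ι ℝ).mp hA, Matrix.one_mul]

lemma sum_sq_apply_left_eq_one {A : Matrix ι ι ℝ} (hA : A ∈ orthogonalGroup ι ℝ) (i : ι) :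
    ∑ j, A i j ^ 2 = 1 := by
  simpa [mul_apply, sq, one_apply] using congrFun₂ ((mem_orthogonalGroup_iff ι ℝ).mp hA) i i

lemma sum_sq_apply_right_eq_one {A : Matrix ι ι ℝ} (hA : A ∈ orthogonalGroup ι ℝ) (j : ι) :
    ∑ i, A i j ^ 2 = 1 := by
  simpa [mul_apply, sq, one_apply] using congrFun₂ ((mem_orthogonalGroup_iff' ι ℝ).mp hA) j j

lemma IsHermitian.eq_eigenvectorUnitary_mul_diagonal_mul_transpose {X : Matrix ι ι ℝ}
    (hX : X.IsHermitian) :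
    X = (hX.eigenvectorUnitary : Matrix ι ι ℝ) * diagonal hX.eigenvalues *
      (hX.eigenvectorUnitary : Matrix ι ι ℝ)ᵀ := by
  conv_lhs => rw [hX.spectral_theorem]
  simp [Unitary.conjStarAlgAut_apply, star_eq_conjTranspose]

lemma IsHermitian.transpose_eigenvectorUnitary_mul_mul_eigenvectorUnitary {X : Matrix ι ι ℝ}
    (hX : X.IsHermitian) :
    (hX.eigenvectorUnitary : Matrix ι ι ℝ)ᵀ * X * hX.eigenvectorUnitary =
      diagonal hX.eigenvalues := by
  simpa [Unitary.conjStarAlgAut_star_apply, star_eq_conjTranspose] using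
    hX.conjStarAlgAut_star_eigenvectorUnitary

lemma transpose_mul_diagonal_mul_apply_self (B : Matrix ι ι ℝ) (d : ι → ℝ) (j : ι) :
    (Bᵀ * diagonal d * B) j j = ∑ i, d i * B i j ^ 2 := by
  rw [mul_apply]
  simp only [mul_diagonal, transpose_apply]
  exact sum_congr rfl fun i _ => by ring

/-- Ky Fan's bound: the weights `∑ j ∈ s, B i j ^ 2` lie in `[0, 1]` and have total mass `#s`,
because the rows and columns of `B` are unit vectors. -/
lemma sum_transpose_mul_diagonal_mul_apply_self_le {B : Matrix ι ι ℝ}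
    (hB : B ∈ orthogonalGroup ι ℝ) (d : ι → ℝ) (s : Finset ι) :
    ∑ j ∈ s, (Bᵀ * diagonal d * B) j j ≤ sumLargest d #s := by
  simp_rw [transpose_mul_diagonal_mul_apply_self]
  rw [sum_comm]
  simp_rw [← mul_sum]
  refine le_of_eq_of_le (sum_congr rfl fun i _ => mul_comm _ _) (sum_mul_le_sumLargest
    (fun i => sum_nonneg fun j _ => sq_nonneg _) (fun i => ?_) ?_)
  · rw [← sum_sq_apply_left_eq_one hB i]
    exact sum_le_sum_of_subset_of_nonneg (subset_univ s) fun j _ _ => sq_nonneg _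
  · rw [sum_comm]
    simp [sum_sq_apply_right_eq_one hB]

lemma permMatrix_mem_orthogonalGroup (σ : Equiv.Perm ι) :
    σ.permMatrix ℝ ∈ orthogonalGroup ι ℝ := by
  rw [mem_orthogonalGroup_iff, transpose_permMatrix, ← permMatrix_mul, inv_mul_cancel,
    permMatrix_one]

lemma permMatrix_mul_diagonal_mul_transpose (σ : Equiv.Perm ι) (d : ι → ℝ) :
    σ.permMatrix ℝ * diagonal d * (σ.permMatrix ℝ)ᵀ = diagonal (d ∘ σ) := by
  rw [transpose_permMatrix, Equiv.Perm.permMatrix, PEquiv.toMatrix_toPEquiv_mul,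
    Equiv.Perm.permMatrix, PEquiv.mul_toMatrix_toPEquiv, submatrix_submatrix]
  exact submatrix_diagonal_equiv d σ

def orthogonalOrbit (X : Matrix ι ι ℝ) : Set (Matrix ι ι ℝ) :=
  {m | ∃ g ∈ orthogonalGroup ι ℝ, m = g * X * gᵀ}

lemma IsHermitian.mem_orthogonalOrbit_iff {X M : Matrix ι ι ℝ} (hX : X.IsHermitian) :
    M ∈ orthogonalOrbit X ↔
      ∃ W ∈ orthogonalGroup ι ℝ, M = W * diagonal hX.eigenvalues * Wᵀ := by
  set U := (hX.eigenvectorUnitary : Matrix ι ι ℝ)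
  have hU : U ∈ orthogonalGroup ι ℝ := hX.eigenvectorUnitary.2
  have hXU : X = U * diagonal hX.eigenvalues * Uᵀ :=
    hX.eq_eigenvectorUnitary_mul_diagonal_mul_transpose
  constructor
  · rintro ⟨g, hg, rfl⟩
    refine ⟨g * U, mul_mem hg hU, ?_⟩
    conv_lhs => rw [hXU]
    simp only [transpose_mul, Matrix.mul_assoc]
  · rintro ⟨W, hW, rfl⟩
    refine ⟨W * Uᵀ, mul_mem hW (transpose_mem_orthogonalGroup hU), ?_⟩
    conv_rhs => rw [hXU]
    simp only [transpose_mul, transpose_transpose, Matrix.mul_assoc, transpose_mul_cancel_left hU]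

lemma trace_eq_of_mem_convexHull_orthogonalOrbit {X Y : Matrix ι ι ℝ}
    (hY : Y ∈ convexHull ℝ (orthogonalOrbit X)) : Y.trace = X.trace := by
  refine convexHull_min ?_ (convex_hyperplane (traceLinearMap ι ℝ ℝ).isLinear _) hY
  rintro _ ⟨g, hg, rfl⟩
  show trace (g * X * gᵀ) = trace X
  rw [trace_mul_cycle, (mem_orthogonalGroup_iff' ι ℝ).mp hg, Matrix.one_mul]

lemma sumLargest_le_of_mem_convexHull_orthogonalOrbit {X Y : Matrix ι ι ℝ} (hX : X.IsHermitian)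
    (hY : Y.IsHermitian) (h : Y ∈ convexHull ℝ (orthogonalOrbit X)) {p : ℕ}
    (hp : p ≤ Fintype.card ι) :
    sumLargest hY.eigenvalues p ≤ sumLargest hX.eigenvalues p := by
  obtain ⟨s, rfl, hs⟩ := exists_sumLargest_eq_sum hY.eigenvalues hp
  set V := (hY.eigenvectorUnitary : Matrix ι ι ℝ)
  have hV : V ∈ orthogonalGroup ι ℝ := hY.eigenvectorUnitary.2
  -- the trace of the compression of `M` to the span of the eigenvectors of `Y` indexed by `s`
  set φ : Matrix ι ι ℝ → ℝ := fun M => ∑ j ∈ s, (Vᵀ * M * V) j j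
  have hφ : IsLinearMap ℝ φ :=
    ⟨fun M N => by simp [φ, Matrix.mul_add, Matrix.add_mul, sum_add_distrib],
      fun c M => by simp [φ, mul_sum]⟩
  have horbit : orthogonalOrbit X ⊆ {M | φ M ≤ sumLargest hX.eigenvalues #s} := by
    intro M hM
    obtain ⟨W, hW, rfl⟩ := hX.mem_orthogonalOrbit_iff.mp hM
    have hconj : Vᵀ * (W * diagonal hX.eigenvalues * Wᵀ) * V =
        (Wᵀ * V)ᵀ * diagonal hX.eigenvalues * (Wᵀ * V) := by
      simp only [transpose_mul, transpose_transpose, Matrix.mul_assoc]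
    show φ _ ≤ _
    simp only [φ, hconj]
    exact sum_transpose_mul_diagonal_mul_apply_self_le
      (mul_mem (transpose_mem_orthogonalGroup hW) hV) _ _
  have hφY : φ Y = ∑ j ∈ s, hY.eigenvalues j := by
    simp [φ, V, hY.transpose_eigenvectorUnitary_mul_mul_eigenvectorUnitary]
  rw [hs, ← hφY]
  exact convexHull_min horbit (convex_halfSpace_le hφ _) h

lemma mem_convexHull_orthogonalOrbit_of_majorized {n : ℕ} {X Y : Matrix (Fin n) (Fin n) ℝ}
    (hX : X.IsHermitian) (hY : Y.IsHermitian)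
    (hsum : ∑ i, hY.eigenvalues i = ∑ i, hX.eigenvalues i)
    (hmaj : ∀ p : ℕ, 1 ≤ p → p ≤ n → sumLargest hY.eigenvalues p ≤ sumLargest hX.eigenvalues p) :
    Y ∈ convexHull ℝ (orthogonalOrbit X) := by
  set V := (hY.eigenvectorUnitary : Matrix (Fin n) (Fin n) ℝ)
  have hV : V ∈ orthogonalGroup (Fin n) ℝ := hY.eigenvectorUnitary.2
  have hconj : IsLinearMap ℝ fun x : Fin n → ℝ => V * diagonal x * Vᵀ :=
    ⟨fun x y => by rw [← Matrix.add_mul, ← Matrix.mul_add, diagonal_add]; rfl,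
      fun c x => by rw [diagonal_smul, Matrix.mul_smul, Matrix.smul_mul]⟩
  have hYV : Y ∈ (fun x => V * diagonal x * Vᵀ) ''
      convexHull ℝ (Set.range fun σ : Equiv.Perm (Fin n) => hX.eigenvalues ∘ σ) :=
    ⟨_, mem_convexHull_perm_of_majorized hsum hmaj,
      hY.eq_eigenvectorUnitary_mul_diagonal_mul_transpose.symm⟩
  rw [hconj.image_convexHull] at hYV
  refine convexHull_mono ?_ hYV
  rintro _ ⟨_, ⟨σ, rfl⟩, rfl⟩
  refine hX.mem_orthogonalOrbit_iff.mpr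
    ⟨V * σ.permMatrix ℝ, mul_mem hV (permMatrix_mem_orthogonalGroup σ), ?_⟩
  simp only [← permMatrix_mul_diagonal_mul_transpose, transpose_mul, Matrix.mul_assoc]

end Matrix

/-- Let `X`, `Y` be real symmetric `n × n` matrices. Then `Y` lies in the convex
hull of `{g X gᵀ : g ∈ O(n)}` iff `tr Y = tr X` and for every `p = 1, …, n` the sum of the `p`
largest eigenvalues of `Y` is at most the sum of the `p` largest eigenvalues of `X`. -/
theorem mem_schurHorn_orbitope_iff
    {n : ℕ} (X Y : Matrix (Fin n) (Fin n) ℝ)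
    (hX : X.IsHermitian) (hY : Y.IsHermitian) :
    Y ∈ convexHull ℝ {m : Matrix (Fin n) (Fin n) ℝ |
        ∃ g ∈ Matrix.orthogonalGroup (Fin n) ℝ, m = g * X * gᵀ} ↔
      Y.trace = X.trace ∧
        ∀ p : ℕ, 1 ≤ p → p ≤ n →
          sumLargest hY.eigenvalues p ≤ sumLargest hX.eigenvalues p := by
  change Y ∈ convexHull ℝ (orthogonalOrbit X) ↔ _
  refine ⟨fun h => ⟨trace_eq_of_mem_convexHull_orthogonalOrbit h, fun p _ hp =>
    sumLargest_le_of_mem_convexHull_orthogonalOrbit hX hY h (by simpa using hp)⟩, ?_⟩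
  rintro ⟨htr, hmaj⟩
  refine mem_convexHull_orthogonalOrbit_of_majorized hX hY ?_ hmaj
  simpa [hX.trace_eq_sum_eigenvalues, hY.trace_eq_sum_eigenvalues] using htr
end

section
/- Fix n ≥ 1 and M ∈ Mat_n(ℝ). Let e : Mat_n(ℝ) → Mat_{2n+1}(ℝ) be the injective linear map sending B to the symmetric matrix B₀ whose top-right n×n corner (rows 1,…,n, columns n+2,…,2n+1) equals B, whose bottom-left corner equals Bᵀ, and all of whose other entries are zero (in particular the (n+1)-st row and column of B₀ are zero). Let K := {diag(u, v) : u ∈ SO(n+1), v ∈ SO(n)} ⊆ SO(2n+1), embedded block-diagonally, which acts on Mat_{2n+1}(ℝ) by conjugation. Then e(convexHull{g M hᵀ : g, h ∈ O(n)}) = convexHull{k (e M) kᵀ : k ∈ K} ∩ range(e). In other words, identifying Mat_n(ℝ) with its image under e, the Fan orbitope C_M := convexHull{g M hᵀ : g, h ∈ O(n)} equals the intersection of the polar orbitope O_{M₀} := convexHull{k M₀ kᵀ : k ∈ K} with Mat_n(ℝ), where M₀ = e(M). -/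
/-!
Projecting onto the top-right `n × n` corner sends `diag(u, v) M₀ diag(u, v)ᵀ` to `u₁₁ M vᵀ`,
where `u₁₁` is the top-left block of `u ∈ SO(n+1)`. If `u` has last row `(c, δ)` and last column
`(b, δ)`, then `u₁₁ + t b c` is orthogonal whenever `t²(1-δ²) - 2tδ = 1`, and for `|δ| < 1` the
matrix `u₁₁` is the convex combination of the solutions `t = 1/(1-δ)` and `t = -1/(1+δ)` with
weights `(1 ∓ δ)/2` (if `|δ| = 1` then `c = 0` and `u₁₁` is itself orthogonal). Hence the corner of the polar orbitope lies in the Fan orbitope.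

Conversely `(g M hᵀ)₀` is the conjugate of `M₀` by `diag(diag(g, det g), h)` as soon as
`det h = 1`. Otherwise replace `(g, h)` by `(g a, h w)`, where `w` is the reflection in an
eigenvector `x` of `MᵀM` and `a` the reflection in `M x`, so that `a M = M w`.
-/

open Matrix

/-- The injective linear embedding `B ↦ B₀` of `n × n` matrices into symmetric
`(2n+1) × (2n+1)` matrices: the top-right `n × n` corner is `B`, the bottom-left corner is
`Bᵀ`, and all other entries (in particular the whole middle row and column) are zero.
The row/column index set `(Fin n ⊕ Fin 1) ⊕ Fin n` plays the role of `Fin (2n+1)`,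
grouped so that the first block has size `n + 1`. -/
def matEmb {n : ℕ} (B : Matrix (Fin n) (Fin n) ℝ) :
    Matrix ((Fin n ⊕ Fin 1) ⊕ Fin n) ((Fin n ⊕ Fin 1) ⊕ Fin n) ℝ :=
  Matrix.fromBlocks 0 (Matrix.fromRows B 0) (Matrix.fromRows B 0)ᵀ 0

namespace Matrix

section Householder

variable {ι : Type*} [Fintype ι] [DecidableEq ι]

/-- The reflection in the hyperplane `z^⊥` (the identity when `z = 0`, since `2 / 0 = 0`). -/
noncomputable def householder (z : ι → ℝ) : Matrix ι ι ℝ :=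
  1 - (2 / (z ⬝ᵥ z)) • vecMulVec z z

theorem transpose_householder (z : ι → ℝ) : (householder z)ᵀ = householder z := by
  simp [householder, transpose_vecMulVec]

theorem householder_mem_orthogonalGroup (z : ι → ℝ) :
    householder z ∈ orthogonalGroup ι ℝ := by
  rw [mem_orthogonalGroup_iff, transpose_householder]
  rcases eq_or_ne (z ⬝ᵥ z) 0 with hz | hz
  · simp [householder, hz]
  · simp only [householder, sub_mul, mul_sub, one_mul, mul_one, smul_mul_assoc, mul_smul_comm,
      smul_smul, vecMulVec_mul_vecMulVec, vecMulVec_smul]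
    rw [div_mul_cancel₀ _ hz]
    module

theorem det_householder {z : ι → ℝ} (hz : z ≠ 0) : (householder z).det = -1 := by
  have hzz : z ⬝ᵥ z ≠ 0 := by simpa using hz
  rw [householder, vecMulVec_eq (Fin 1), sub_eq_add_neg, ← neg_smul, ← Matrix.smul_mul,
    ← replicateCol_smul, det_one_add_replicateCol_mul_replicateRow, dotProduct_smul, smul_eq_mul]
  field_simp
  ring

theorem householder_mulVec_mul_eq_mul_householder {M : Matrix ι ι ℝ} {x : ι → ℝ} {μ : ℝ}
    (hx : (Mᵀ * M) *ᵥ x = μ • x) : householder (M *ᵥ x) * M = M * householder x := by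
  set z := M *ᵥ x with hz_def
  have hzM : z ᵥ* M = μ • x := by rw [← mulVec_transpose, mulVec_mulVec, hx]
  have hzz : z ⬝ᵥ z = μ * (x ⬝ᵥ x) := by
    change z ⬝ᵥ (M *ᵥ x) = _
    rw [dotProduct_mulVec, hzM, smul_dotProduct, smul_eq_mul]
  rw [householder, householder, sub_mul, mul_sub, one_mul, mul_one, smul_mul_assoc, vecMulVec_mul,
    hzM, mul_smul_comm, mul_vecMulVec, ← hz_def, vecMulVec_smul, smul_smul, hzz]
  rcases eq_or_ne μ 0 with hμ | hμ
  · have hz : z = 0 := dotProduct_self_eq_zero.mp (by rw [hzz, hμ, zero_mul])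
    simp [hμ, hz]
  · congr 2
    field_simp

theorem exists_mul_eq_mul_of_det_eq_neg_one [Nonempty ι] (M : Matrix ι ι ℝ) :
    ∃ a ∈ orthogonalGroup ι ℝ, ∃ w ∈ orthogonalGroup ι ℝ, w.det = -1 ∧ a * M = M * w := by
  have hMM : (Mᵀ * M).IsHermitian := by
    simpa [conjTranspose_eq_transpose_of_trivial] using isHermitian_conjTranspose_mul_self M
  let i : ι := Classical.arbitrary ι
  let x : ι → ℝ := ⇑(hMM.eigenvectorBasis i)
  have hx : x ≠ 0 := by simpa [x] using hMM.eigenvectorBasis.orthonormal.ne_zero i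
  exact ⟨householder (M *ᵥ x), householder_mem_orthogonalGroup _, householder x,
    householder_mem_orthogonalGroup x, det_householder hx,
    householder_mulVec_mul_eq_mul_householder (hMM.mulVec_eigenvectorBasis i)⟩

end Householder

section Blocks

variable {ι : Type*}

theorem toBlocks₂₂_eq_smul_one (u : Matrix (ι ⊕ Fin 1) (ι ⊕ Fin 1) ℝ) :
    u.toBlocks₂₂ = u (.inr 0) (.inr 0) • 1 := by
  ext i j
  fin_cases i; fin_cases j
  simp [toBlocks₂₂]

variable [Fintype ι] [DecidableEq ι] {u : Matrix (ι ⊕ Fin 1) (ι ⊕ Fin 1) ℝ}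

theorem toBlocks₂₁_mul_transpose_self (hu : u ∈ orthogonalGroup (ι ⊕ Fin 1) ℝ) :
    u.toBlocks₂₁ * u.toBlocks₂₁ᵀ = (1 - u (.inr 0) (.inr 0) ^ 2) • 1 := by
  have h := congr_arg toBlocks₂₂ ((mem_orthogonalGroup_iff _ ℝ).mp hu)
  rw [← fromBlocks_toBlocks u, fromBlocks_transpose, fromBlocks_multiply, ← fromBlocks_one,
    toBlocks_fromBlocks₂₂, toBlocks_fromBlocks₂₂, toBlocks₂₂_eq_smul_one] at h
  rw [eq_sub_of_add_eq h]
  simp only [transpose_smul, transpose_one, Algebra.mul_smul_comm, mul_one, sq]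
  module

theorem toBlocks₁₁_add_smul_mem_orthogonalGroup (hu : u ∈ orthogonalGroup (ι ⊕ Fin 1) ℝ)
    {t : ℝ} (ht : t ^ 2 * (1 - u (.inr 0) (.inr 0) ^ 2) - 2 * t * u (.inr 0) (.inr 0) = 1) :
    u.toBlocks₁₁ + t • (u.toBlocks₁₂ * u.toBlocks₂₁) ∈ orthogonalGroup ι ℝ := by
  have hcc := toBlocks₂₁_mul_transpose_self hu
  have h := (mem_orthogonalGroup_iff _ ℝ).mp hu
  rw [← fromBlocks_toBlocks u, fromBlocks_transpose, fromBlocks_multiply, ← fromBlocks_one,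
    fromBlocks_inj, toBlocks₂₂_eq_smul_one] at h
  set δ := u (.inr 0) (.inr 0)
  set a := u.toBlocks₁₁
  set b := u.toBlocks₁₂
  set c := u.toBlocks₂₁
  obtain ⟨haa, hac, -, -⟩ := h
  have hac' : a * cᵀ = -δ • b := by
    rw [eq_neg_of_add_eq_zero_left hac]
    simp
  rw [mem_orthogonalGroup_iff]
  calc (a + t • (b * c)) * (a + t • (b * c))ᵀ
      = a * aᵀ + t • (b * (a * cᵀ)ᵀ) + t • ((a * cᵀ) * bᵀ) + t ^ 2 • (b * (c * cᵀ) * bᵀ) := by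
        simp only [transpose_add, transpose_smul, transpose_mul, transpose_transpose, add_mul,
          mul_add, Matrix.mul_assoc, Matrix.smul_mul, Matrix.mul_smul, smul_smul, sq]
        abel
    _ = 1 + (t ^ 2 * (1 - δ ^ 2) - 2 * t * δ - 1) • (b * bᵀ) := by
        rw [hac', hcc, eq_sub_of_add_eq haa]
        simp only [transpose_smul, Matrix.mul_smul, Matrix.smul_mul, Matrix.mul_one]
        module
    _ = 1 := by rw [ht, sub_self, zero_smul, add_zero]

theorem toBlocks₁₁_mem_convexHull_orthogonalGroup (hu : u ∈ orthogonalGroup (ι ⊕ Fin 1) ℝ) :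
    u.toBlocks₁₁ ∈ convexHull ℝ (orthogonalGroup ι ℝ : Set (Matrix ι ι ℝ)) := by
  set δ := u (.inr 0) (.inr 0)
  have hδ : |δ| ≤ 1 := by simpa using entry_norm_bound_of_unitary hu (.inr 0) (.inr 0)
  rcases hδ.lt_or_eq with hlt | heq
  · obtain ⟨hδ₁, hδ₂⟩ := abs_lt.mp hlt
    have hδ_sub : 1 - δ ≠ 0 := by linarith
    have hδ_add : 1 + δ ≠ 0 := by linarith
    have h₁ := toBlocks₁₁_add_smul_mem_orthogonalGroup hu (t := 1 / (1 - δ)) (by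
      field_simp
      ring)
    have h₂ := toBlocks₁₁_add_smul_mem_orthogonalGroup hu (t := -(1 / (1 + δ))) (by
      field_simp
      ring)
    refine segment_subset_convexHull h₁ h₂ ⟨(1 - δ) / 2, (1 + δ) / 2, by linarith, by linarith,
      by ring, ?_⟩
    match_scalars <;> field_simp <;> ring
  · have hδ : δ ^ 2 = 1 := by rw [← sq_abs, heq, one_pow]
    have hc : u.toBlocks₂₁ = 0 := by
      rw [← self_mul_conjTranspose_eq_zero, conjTranspose_eq_transpose_of_trivial,
        toBlocks₂₁_mul_transpose_self hu, hδ, sub_self, zero_smul]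
    have h := toBlocks₁₁_add_smul_mem_orthogonalGroup hu (t := -δ / 2) (by
      linear_combination (1 - (δ / 2) ^ 2) * hδ)
    rw [hc, Matrix.mul_zero, smul_zero, add_zero] at h
    exact subset_convexHull ℝ _ h

theorem fromBlocks_det_smul_one_mem_specialOrthogonalGroup {g : Matrix ι ι ℝ}
    (hg : g ∈ orthogonalGroup ι ℝ) :
    fromBlocks g 0 0 (g.det • 1 : Matrix (Fin 1) (Fin 1) ℝ) ∈
      specialOrthogonalGroup (ι ⊕ Fin 1) ℝ := by
  have hdet : g.det * g.det = 1 := by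
    rcases Unitary.mem_iff_eq_one_or_eq_neg_one.mp (det_of_mem_unitary hg) with h | h <;> simp [h]
  refine ⟨(mem_orthogonalGroup_iff _ ℝ).mpr ?_, ?_⟩
  · rw [fromBlocks_transpose, fromBlocks_multiply, (mem_orthogonalGroup_iff _ ℝ).mp hg]
    simp [smul_smul, hdet]
  · simp [det_fromBlocks_zero₂₁, hdet]

end Blocks

theorem fromBlocks_mul_fromBlocks_mul_transpose {l m R : Type*} [CommRing R] [Fintype l]
    [Fintype m] (u : Matrix l l R) (v : Matrix m m R) (N : Matrix l m R) :
    fromBlocks u 0 0 v * fromBlocks 0 N Nᵀ 0 * (fromBlocks u 0 0 v)ᵀ =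
      fromBlocks 0 (u * N * vᵀ) (u * N * vᵀ)ᵀ 0 := by
  simp [fromBlocks_transpose, fromBlocks_multiply, Matrix.mul_assoc]

end Matrix

section Orbitopes

variable {ι : Type*} [Fintype ι] [DecidableEq ι] {n : ℕ}

noncomputable def matEmbₗ (n : ℕ) : Matrix (Fin n) (Fin n) ℝ →ₗ[ℝ]
    Matrix ((Fin n ⊕ Fin 1) ⊕ Fin n) ((Fin n ⊕ Fin 1) ⊕ Fin n) ℝ where
  toFun := matEmb
  map_add' _ _ := by ext ((i | i) | i) ((j | j) | j) <;> simp [matEmb]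
  map_smul' _ _ := by ext ((i | i) | i) ((j | j) | j) <;> simp [matEmb]

@[simps]
def topRightCornerₗ (n : ℕ) : Matrix ((Fin n ⊕ Fin 1) ⊕ Fin n) ((Fin n ⊕ Fin 1) ⊕ Fin n) ℝ →ₗ[ℝ]
    Matrix (Fin n) (Fin n) ℝ where
  toFun X := X.toBlocks₁₂.toRows₁
  map_add' _ _ := rfl
  map_smul' _ _ := rfl

theorem topRightCornerₗ_matEmb (B : Matrix (Fin n) (Fin n) ℝ) :
    topRightCornerₗ n (matEmb B) = B := by
  ext i j
  simp [matEmb]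

theorem topRightCornerₗ_conj_matEmb (M : Matrix (Fin n) (Fin n) ℝ)
    (u : Matrix (Fin n ⊕ Fin 1) (Fin n ⊕ Fin 1) ℝ) (v : Matrix (Fin n) (Fin n) ℝ) :
    topRightCornerₗ n (fromBlocks u 0 0 v * matEmb M * (fromBlocks u 0 0 v)ᵀ) =
      u.toBlocks₁₁ * M * vᵀ := by
  rw [matEmb, fromBlocks_mul_fromBlocks_mul_transpose, ← fromBlocks_toBlocks u]
  simp [fromBlocks_mul_fromRows]

theorem conj_matEmb_fromBlocks (M g v : Matrix (Fin n) (Fin n) ℝ)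
    (e : Matrix (Fin 1) (Fin 1) ℝ) :
    fromBlocks (fromBlocks g 0 0 e) 0 0 v * matEmb M * (fromBlocks (fromBlocks g 0 0 e) 0 0 v)ᵀ =
      matEmb (g * M * vᵀ) := by
  simp [matEmb, fromBlocks_mul_fromBlocks_mul_transpose, fromBlocks_mul_fromRows]

def fanOrbit (M : Matrix ι ι ℝ) : Set (Matrix ι ι ℝ) :=
  {m | ∃ g ∈ orthogonalGroup ι ℝ, ∃ h ∈ orthogonalGroup ι ℝ, m = g * M * hᵀ}

def polarOrbit (M : Matrix (Fin n) (Fin n) ℝ) :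
    Set (Matrix ((Fin n ⊕ Fin 1) ⊕ Fin n) ((Fin n ⊕ Fin 1) ⊕ Fin n) ℝ) :=
  {m | ∃ u ∈ specialOrthogonalGroup (Fin n ⊕ Fin 1) ℝ, ∃ v ∈ specialOrthogonalGroup (Fin n) ℝ,
    m = fromBlocks u 0 0 v * matEmb M * (fromBlocks u 0 0 v)ᵀ}

theorem exists_eq_mul_mul_transpose_of_mem_fanOrbit {M m : Matrix ι ι ℝ} (hm : m ∈ fanOrbit M) :
    ∃ g ∈ orthogonalGroup ι ℝ, ∃ h ∈ specialOrthogonalGroup ι ℝ, m = g * M * hᵀ := by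
  obtain ⟨g, hg, h, hh, rfl⟩ := hm
  rcases Unitary.mem_iff_eq_one_or_eq_neg_one.mp (det_of_mem_unitary hh) with hdet | hdet
  · exact ⟨g, hg, h, ⟨hh, hdet⟩, rfl⟩
  have : Nonempty ι := not_isEmpty_iff.mp fun _ ↦ by norm_num [det_isEmpty] at hdet
  obtain ⟨a, ha, w, hw, hw_det, haM⟩ := exists_mul_eq_mul_of_det_eq_neg_one M
  refine ⟨g * a, mul_mem hg ha, h * w, ⟨mul_mem hh hw, by simp [hdet, hw_det]⟩, ?_⟩
  calc g * M * hᵀ = g * (M * (w * wᵀ)) * hᵀ := by rw [(mem_orthogonalGroup_iff _ ℝ).mp hw, mul_one]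
    _ = g * a * M * (h * w)ᵀ := by
      rw [transpose_mul, Matrix.mul_assoc g a, haM]
      simp only [Matrix.mul_assoc]

theorem mul_mul_transpose_mem_convexHull_fanOrbit (M : Matrix ι ι ℝ) {g h : Matrix ι ι ℝ}
    (hg : g ∈ convexHull ℝ (orthogonalGroup ι ℝ : Set (Matrix ι ι ℝ)))
    (hh : h ∈ orthogonalGroup ι ℝ) :
    g * M * hᵀ ∈ convexHull ℝ (fanOrbit M) := by
  have hmem := Set.mem_image_of_mem (LinearMap.mulRight ℝ (M * hᵀ)) hg
  rw [LinearMap.image_convexHull, LinearMap.mulRight_apply, ← Matrix.mul_assoc] at hmem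
  refine convexHull_mono ?_ hmem
  rintro _ ⟨g', hg', rfl⟩
  exact ⟨g', hg', h, hh, (Matrix.mul_assoc _ _ _).symm⟩

theorem matEmb_image_fanOrbit_subset_polarOrbit (M : Matrix (Fin n) (Fin n) ℝ) :
    matEmb '' fanOrbit M ⊆ polarOrbit M := by
  rintro _ ⟨m, hm, rfl⟩
  obtain ⟨g, hg, h, hh, rfl⟩ := exists_eq_mul_mul_transpose_of_mem_fanOrbit hm
  exact ⟨_, fromBlocks_det_smul_one_mem_specialOrthogonalGroup hg, h, hh,
    (conj_matEmb_fromBlocks M g h _).symm⟩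

theorem topRightCornerₗ_image_polarOrbit_subset (M : Matrix (Fin n) (Fin n) ℝ) :
    topRightCornerₗ n '' polarOrbit M ⊆ convexHull ℝ (fanOrbit M) := by
  rintro _ ⟨_, ⟨u, hu, v, hv, rfl⟩, rfl⟩
  rw [topRightCornerₗ_conj_matEmb]
  exact mul_mul_transpose_mem_convexHull_fanOrbit M
    (toBlocks₁₁_mem_convexHull_orthogonalGroup hu.1) hv.1

end Orbitopes

theorem image_fan_orbitope_eq_polar_orbitope_inter_general
    {n : ℕ} (M : Matrix (Fin n) (Fin n) ℝ) :
    matEmb '' (convexHull ℝ {m : Matrix (Fin n) (Fin n) ℝ |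
        ∃ g ∈ Matrix.orthogonalGroup (Fin n) ℝ,
          ∃ h ∈ Matrix.orthogonalGroup (Fin n) ℝ, m = g * M * hᵀ}) =
      convexHull ℝ {m : Matrix ((Fin n ⊕ Fin 1) ⊕ Fin n) ((Fin n ⊕ Fin 1) ⊕ Fin n) ℝ |
          ∃ u ∈ Matrix.specialOrthogonalGroup (Fin n ⊕ Fin 1) ℝ,
            ∃ v ∈ Matrix.specialOrthogonalGroup (Fin n) ℝ,
              m = Matrix.fromBlocks u 0 0 v * matEmb M * (Matrix.fromBlocks u 0 0 v)ᵀ}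
        ∩ Set.range matEmb := by
  change matEmb '' convexHull ℝ (fanOrbit M) = convexHull ℝ (polarOrbit M) ∩ Set.range matEmb
  refine Set.Subset.antisymm ?_ ?_
  · rintro _ ⟨B, hB, rfl⟩
    refine ⟨?_, B, rfl⟩
    have hmem := Set.mem_image_of_mem (matEmbₗ n) hB
    rw [LinearMap.image_convexHull] at hmem
    exact convexHull_mono (matEmb_image_fanOrbit_subset_polarOrbit M) hmem
  · rintro _ ⟨hB, B, rfl⟩
    refine ⟨B, ?_, rfl⟩
    have hmem := Set.mem_image_of_mem (topRightCornerₗ n) hB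
    rw [LinearMap.image_convexHull, topRightCornerₗ_matEmb] at hmem
    exact convexHull_min (topRightCornerₗ_image_polarOrbit_subset M) (convex_convexHull ℝ _) hmem

/-- the Fan orbitope `C_M = convexHull {g M hᵀ : g, h ∈ O(n)}`, viewed inside
`Mat_{2n+1}(ℝ)` via the embedding `B ↦ B₀`, equals the intersection of the polar orbitope
`O_{M₀} = convexHull {k M₀ kᵀ : k ∈ K}` with the image of the embedding, where
`K = {diag(u, v) : u ∈ SO(n+1), v ∈ SO(n)}` acts by conjugation. -/
theorem image_fan_orbitope_eq_polar_orbitope_inter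
    {n : ℕ} (hn : 1 ≤ n) (M : Matrix (Fin n) (Fin n) ℝ) :
    matEmb '' (convexHull ℝ {m : Matrix (Fin n) (Fin n) ℝ |
        ∃ g ∈ Matrix.orthogonalGroup (Fin n) ℝ,
          ∃ h ∈ Matrix.orthogonalGroup (Fin n) ℝ, m = g * M * hᵀ}) =
      convexHull ℝ {m : Matrix ((Fin n ⊕ Fin 1) ⊕ Fin n) ((Fin n ⊕ Fin 1) ⊕ Fin n) ℝ |
          ∃ u ∈ Matrix.specialOrthogonalGroup (Fin n ⊕ Fin 1) ℝ,
            ∃ v ∈ Matrix.specialOrthogonalGroup (Fin n) ℝ,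
              m = Matrix.fromBlocks u 0 0 v * matEmb M * (Matrix.fromBlocks u 0 0 v)ᵀ}
        ∩ Set.range matEmb :=
  image_fan_orbitope_eq_polar_orbitope_inter_general M
end

section
/- Let X be a real diagonal n×n matrix, O_X := convexHull{g X gᵀ : g ∈ O(n)}, Π_X := convexHull{σ·X : σ ∈ S_n}, and P the linear map on n×n real matrices that sets all off-diagonal entries to zero. Let F be a face of O_X and k ∈ O(n) such that f := P({k Y kᵀ : Y ∈ F}) is a face of Π_X. Then {k Y kᵀ : Y ∈ F} = P⁻¹(f) ∩ O_X and f = {k Y kᵀ : Y ∈ F} ∩ {diagonal matrices}. -/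
/-!
Conjugation by `k` maps `O_X = orthOrbitHull d` onto itself, so `K = k F kᵀ` is again a face of
`O_X`. Every `Z ∈ O_X` has Frobenius norm at most that of `X`, so if the diagonal of `Z` is a
permutation of that of `X`, the off-diagonal entries of `Z` vanish. Hence a vertex `σ·X` lying in
`f = P(K)` is `P(Z)` for some `Z ∈ K` with `Z = σ·X`, and since a face of the polytope `Π_X` is
the convex hull of the vertices it contains, `f ⊆ K`. Conversely, `P(Y)` is the average of the
conjugates of `Y` by the diagonal sign matrices, all of which lie in `O_X` when `Y` does, so
`P(Y) ∈ K` forces `Y ∈ K` because `K` is a face.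
-/

open Matrix

/-- The linear operation on `n × n` real matrices that sets all off-diagonal entries to zero
(orthogonal projection onto the subspace of diagonal matrices). -/
def diagPart {n : ℕ} (A : Matrix (Fin n) (Fin n) ℝ) : Matrix (Fin n) (Fin n) ℝ :=
  Matrix.diagonal (fun i => A i i)

section Faces

variable {𝕜 E F : Type*} [Field 𝕜] [LinearOrder 𝕜] [IsStrictOrderedRing 𝕜]
  [AddCommGroup E] [Module 𝕜 E] [AddCommGroup F] [Module 𝕜 F] {A B V : Set E}

theorem IsExtreme.image_linearEquiv (h : IsExtreme 𝕜 A B) (e : E ≃ₗ[𝕜] F) :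
    IsExtreme 𝕜 (e '' A) (e '' B) := by
  refine ⟨Set.image_mono h.subset, ?_⟩
  rintro _ ⟨x, hx, rfl⟩ _ ⟨y, hy, rfl⟩ _ ⟨z, hz, rfl⟩ hseg
  rw [← e.coe_toLinearMap, ← LinearMap.coe_toAffineMap, ← image_openSegment] at hseg
  exact ⟨x, h.left_mem_of_mem_openSegment hx hy hz (e.injective.mem_set_image.1 hseg), rfl⟩

theorem IsExtreme.mem_of_sum_smul_mem {ι : Type*} {t : Finset ι} {w : ι → 𝕜} {z : ι → E}
    (h : IsExtreme 𝕜 A B) (hA : Convex 𝕜 A) (hw₀ : ∀ i ∈ t, 0 ≤ w i) (hw₁ : ∑ i ∈ t, w i = 1)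
    (hz : ∀ i ∈ t, z i ∈ A) (hB : ∑ i ∈ t, w i • z i ∈ B) {j : ι} (hj : j ∈ t)
    (hwj : 0 < w j) : z j ∈ B := by
  classical
  set s := t.erase j
  have hs₀ : ∀ i ∈ s, 0 ≤ w i := fun i hi => hw₀ i (Finset.mem_of_mem_erase hi)
  rw [← Finset.add_sum_erase t _ hj] at hw₁ hB
  rcases (Finset.sum_nonneg hs₀).eq_or_lt with hW | hW
  · have hws : ∀ i ∈ s, w i = 0 := (Finset.sum_eq_zero_iff_of_nonneg hs₀).1 hW.symm
    rw [Finset.sum_eq_zero fun i hi => by rw [hws i hi, zero_smul], add_zero,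
      show w j = 1 by linarith, one_smul] at hB
    exact hB
  · have hy : s.centerMass w z ∈ A :=
      hA.centerMass_mem hs₀ hW fun i hi => hz i (Finset.mem_of_mem_erase hi)
    refine h.left_mem_of_mem_openSegment (hz j hj) hy hB ⟨w j, _, hwj, hW, hw₁, ?_⟩
    rw [Finset.centerMass, smul_inv_smul₀ hW.ne']

theorem IsExtreme.subset_convexHull_inter (h : IsExtreme 𝕜 (convexHull 𝕜 V) B) :
    B ⊆ convexHull 𝕜 (B ∩ V) := by
  classical
  intro x hx
  obtain ⟨ι, t, w, z, hw₀, hw₁, hz, rfl⟩ := (convexHull_eq V).subset (h.subset hx)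
  rw [Finset.centerMass_eq_of_sum_1 _ _ hw₁] at hx
  rw [← Finset.centerMass_filter_ne_zero]
  refine Finset.centerMass_mem_convexHull _ (fun i hi => hw₀ i (Finset.mem_filter.1 hi).1)
    (by rw [Finset.sum_filter_ne_zero, hw₁]; exact one_pos) fun i hi => ?_
  obtain ⟨hi, hwi⟩ := Finset.mem_filter.1 hi
  exact ⟨h.mem_of_sum_smul_mem (convex_convexHull 𝕜 V) hw₀ hw₁
    (fun i hi => subset_convexHull 𝕜 V (hz i hi)) hx hi ((hw₀ i hi).lt_of_ne' hwi), hz i hi⟩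

end Faces

namespace Matrix

theorem isLinearMap_conj {ι R : Type*} [Fintype ι] [CommSemiring R] (u : Matrix ι ι R) :
    IsLinearMap R fun W : Matrix ι ι R => u * W * uᵀ :=
  ⟨fun A B => by simp [Matrix.mul_add, Matrix.add_mul], fun c A => by simp⟩

theorem sum_sq_entries_eq_trace {m n : Type*} [Fintype m] [Fintype n] (A : Matrix m n ℝ) :
    ∑ a, ∑ b, A a b ^ 2 = trace (A * Aᵀ) := by
  simp [trace, mul_apply, sq]

theorem convexOn_sum_sq_entries {m n : Type*} [Fintype m] [Fintype n] :
    ConvexOn ℝ Set.univ fun A : Matrix m n ℝ => ∑ a, ∑ b, A a b ^ 2 := by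
  refine ⟨convex_univ, fun A _ B _ s t hs ht hst => ?_⟩
  simp only [smul_eq_mul, Finset.mul_sum, ← Finset.sum_add_distrib, add_apply, smul_apply]
  gcongr with a _ b _
  nlinarith [mul_nonneg hs ht, sq_nonneg (A a b - B a b)]

variable {ι : Type*} [Fintype ι] [DecidableEq ι]

def orthOrbitHull (d : ι → ℝ) : Set (Matrix ι ι ℝ) :=
  convexHull ℝ {m | ∃ g ∈ orthogonalGroup ι ℝ, m = g * diagonal d * gᵀ}

theorem conj_mem_orthOrbitHull {d : ι → ℝ} {u W : Matrix ι ι ℝ}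
    (hu : u ∈ orthogonalGroup ι ℝ) (hW : W ∈ orthOrbitHull d) :
    u * W * uᵀ ∈ orthOrbitHull d := by
  refine convexHull_min ?_ ((convex_convexHull ℝ _).is_linear_preimage (isLinearMap_conj u)) hW
  rintro _ ⟨g, hg, rfl⟩
  exact subset_convexHull ℝ _ ⟨u * g, mul_mem hu hg, by simp [Matrix.mul_assoc]⟩

theorem isExtreme_orthOrbitHull_conj_image {d : ι → ℝ} {F : Set (Matrix ι ι ℝ)} {u : Matrix ι ι ℝ}
    (hF : IsExtreme ℝ (orthOrbitHull d) F) (hu : u ∈ orthogonalGroup ι ℝ) :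
    IsExtreme ℝ (orthOrbitHull d) ((fun Y => u * Y * uᵀ) '' F) := by
  set e := (Unitary.conjStarAlgAut ℝ _ ⟨u, hu⟩).toAlgEquiv.toLinearEquiv
  have he : ⇑e = fun Y => u * Y * uᵀ := funext fun Y => by simp [e, star_eq_conjTranspose]
  have huT : uᵀ ∈ orthogonalGroup ι ℝ := transpose_mem_unitaryGroup_iff.2 hu
  have hO : e '' orthOrbitHull d = orthOrbitHull d := by
    refine (Set.image_subset_iff.2 fun W hW => ?_).antisymm fun W hW =>
      ⟨e.symm W, ?_, e.apply_symm_apply W⟩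
    · rw [he]; exact conj_mem_orthOrbitHull hu hW
    · simpa [e, Unitary.conjStarAlgAut_symm_apply, star_eq_conjTranspose] using
        conj_mem_orthOrbitHull huT hW
  have := hF.image_linearEquiv e
  rwa [hO, he] at this

theorem sum_sq_entries_conj {g : Matrix ι ι ℝ} (hg : g ∈ orthogonalGroup ι ℝ) (A : Matrix ι ι ℝ) :
    ∑ a, ∑ b, (g * A * gᵀ) a b ^ 2 = ∑ a, ∑ b, A a b ^ 2 := by
  have hgg := (mem_orthogonalGroup_iff' ι ℝ).1 hg
  have : g * A * gᵀ * (g * A * gᵀ)ᵀ = g * (A * Aᵀ) * gᵀ := by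
    simp only [transpose_mul, transpose_transpose, Matrix.mul_assoc]
    rw [← Matrix.mul_assoc gᵀ g, hgg, Matrix.one_mul]
  rw [sum_sq_entries_eq_trace, sum_sq_entries_eq_trace, this, trace_mul_cycle, hgg, Matrix.one_mul]

theorem sum_sq_entries_le_of_mem_orthOrbitHull {d : ι → ℝ} {Z : Matrix ι ι ℝ}
    (hZ : Z ∈ orthOrbitHull d) : ∑ a, ∑ b, Z a b ^ 2 ≤ ∑ i, d i ^ 2 := by
  refine (convexHull_min ?_ (convexOn_sum_sq_entries.convex_le _) hZ).2
  rintro _ ⟨g, hg, rfl⟩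
  simp [sum_sq_entries_conj hg, diagonal_apply, ite_pow]

theorem eq_diagonal_diag_of_mem_orthOrbitHull {d : ι → ℝ} {Z : Matrix ι ι ℝ}
    (hZ : Z ∈ orthOrbitHull d) (hdiag : ∑ i, Z i i ^ 2 = ∑ i, d i ^ 2) :
    Z = diagonal (diag Z) := by
  ext a b
  rcases eq_or_ne a b with rfl | hab
  · simp
  rw [diagonal_apply_ne _ hab]
  have hoff : ∑ i, Z i i ^ 2 + Z a b ^ 2 ≤ ∑ i, ∑ j, Z i j ^ 2 := by
    calc ∑ i, Z i i ^ 2 + Z a b ^ 2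
        ≤ ∑ i, Z i i ^ 2 + ∑ i, ∑ j ∈ Finset.univ.erase i, Z i j ^ 2 := by
          gcongr
          exact (Finset.single_le_sum (f := fun j => Z a j ^ 2) (fun j _ => sq_nonneg _)
            (Finset.mem_erase.2 ⟨hab.symm, Finset.mem_univ b⟩)).trans
            (Finset.single_le_sum (f := fun i => ∑ j ∈ Finset.univ.erase i, Z i j ^ 2)
              (fun i _ => Finset.sum_nonneg fun j _ => sq_nonneg _) (Finset.mem_univ a))
      _ = ∑ i, ∑ j, Z i j ^ 2 := by
          rw [← Finset.sum_add_distrib]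
          exact Finset.sum_congr rfl fun i _ =>
            Finset.add_sum_erase _ (fun j => Z i j ^ 2) (Finset.mem_univ i)
  nlinarith [sum_sq_entries_le_of_mem_orthOrbitHull hZ, sq_nonneg (Z a b)]

def signDiagonal (s : Finset ι) : Matrix ι ι ℝ :=
  diagonal fun i => if i ∈ s then -1 else 1

theorem signDiagonal_mem_orthogonalGroup (s : Finset ι) :
    signDiagonal s ∈ orthogonalGroup ι ℝ := by
  rw [mem_orthogonalGroup_iff, signDiagonal, diagonal_transpose, diagonal_mul_diagonal,
    ← diagonal_one]
  congr 1
  ext i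
  split_ifs <;> norm_num

theorem signDiagonal_conj_mem_orthOrbitHull {d : ι → ℝ} {W : Matrix ι ι ℝ} (s : Finset ι)
    (hW : W ∈ orthOrbitHull d) : signDiagonal s * W * signDiagonal s ∈ orthOrbitHull d := by
  simpa [signDiagonal] using conj_mem_orthOrbitHull (signDiagonal_mem_orthogonalGroup s) hW

theorem sum_sign_mul_sign_of_ne {a b : ι} (hab : a ≠ b) :
    ∑ s : Finset ι, (if a ∈ s then (-1 : ℝ) else 1) * (if b ∈ s then -1 else 1) = 0 := by
  let flip : Equiv.Perm (Finset ι) :=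
    Function.Involutive.toPerm (symmDiff · {a}) fun s => symmDiff_symmDiff_cancel_right _ _
  have ha (s : Finset ι) : a ∈ flip s ↔ a ∉ s := by
    change a ∈ symmDiff s {a} ↔ _; simp [Finset.mem_symmDiff]
  have hb (s : Finset ι) : b ∈ flip s ↔ b ∈ s := by
    change b ∈ symmDiff s {a} ↔ _; simp [Finset.mem_symmDiff, hab.symm]
  refine self_eq_neg.1 (Eq.symm ?_)
  rw [← Finset.sum_neg_distrib]
  refine Fintype.sum_equiv flip _ _ fun s => ?_
  simp only [ha, hb]
  split_ifs <;> norm_num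

theorem sum_signDiagonal_conj (Y : Matrix ι ι ℝ) :
    ∑ s : Finset ι, signDiagonal s * Y * signDiagonal s =
      (Fintype.card (Finset ι) : ℝ) • diagonal (diag Y) := by
  ext a b
  simp only [signDiagonal, sum_apply, diagonal_mul, mul_diagonal, smul_apply, smul_eq_mul]
  rcases eq_or_ne a b with rfl | hab
  · have hsq (s : Finset ι) :
        ((if a ∈ s then -1 else 1) * Y a a * if a ∈ s then -1 else 1) = Y a a := by
      split_ifs <;> ring
    simp only [hsq, Finset.sum_const, Finset.card_univ, nsmul_eq_mul, diagonal_apply_eq, diag_apply]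
  · rw [diagonal_apply_ne _ hab, mul_zero, ← mul_zero (Y a b), ← sum_sign_mul_sign_of_ne hab,
      Finset.mul_sum]
    exact Finset.sum_congr rfl fun s _ => by ring

theorem _root_.IsExtreme.mem_of_diagonal_diag_mem {C K : Set (Matrix ι ι ℝ)} (hK : IsExtreme ℝ C K)
    (hC : Convex ℝ C) (hC_sign : ∀ s, ∀ Y ∈ C, signDiagonal s * Y * signDiagonal s ∈ C)
    {Y : Matrix ι ι ℝ} (hY : Y ∈ C) (hdiag : diagonal (diag Y) ∈ K) : Y ∈ K := by
  set N : ℝ := (Fintype.card (Finset ι) : ℝ)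
  have hN : 0 < N := Nat.cast_pos.2 Fintype.card_pos
  have hsum : ∑ s, N⁻¹ • (signDiagonal s * Y * signDiagonal s) = diagonal (diag Y) := by
    rw [← Finset.smul_sum, sum_signDiagonal_conj, inv_smul_smul₀ hN.ne']
  have := hK.mem_of_sum_smul_mem hC (w := fun _ => N⁻¹) (fun _ _ => by positivity)
    (by simp [Finset.card_univ, N]) (fun s _ => hC_sign s Y hY) (hsum ▸ hdiag)
    (Finset.mem_univ ∅) (by positivity)
  simpa [signDiagonal] using this

end Matrix

theorem conj_face_eq_preimage_inter_general
    {n : ℕ} (d : Fin n → ℝ)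
    (F : Set (Matrix (Fin n) (Fin n) ℝ)) (hFconv : Convex ℝ F)
    (hF : IsExtreme ℝ (convexHull ℝ {m : Matrix (Fin n) (Fin n) ℝ |
        ∃ g ∈ Matrix.orthogonalGroup (Fin n) ℝ, m = g * Matrix.diagonal d * gᵀ}) F)
    (k : Matrix (Fin n) (Fin n) ℝ) (hk : k ∈ Matrix.orthogonalGroup (Fin n) ℝ)
    (hf : IsExtreme ℝ (convexHull ℝ {m : Matrix (Fin n) (Fin n) ℝ |
        ∃ σ : Equiv.Perm (Fin n), m = Matrix.diagonal (fun i => d (σ⁻¹ i))})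
      (diagPart '' ((fun Y => k * Y * kᵀ) '' F))) :
    (fun Y => k * Y * kᵀ) '' F =
        diagPart ⁻¹' (diagPart '' ((fun Y => k * Y * kᵀ) '' F)) ∩
          convexHull ℝ {m : Matrix (Fin n) (Fin n) ℝ |
            ∃ g ∈ Matrix.orthogonalGroup (Fin n) ℝ, m = g * Matrix.diagonal d * gᵀ} ∧
      diagPart '' ((fun Y => k * Y * kᵀ) '' F) =
        ((fun Y => k * Y * kᵀ) '' F) ∩
          Set.range (Matrix.diagonal : (Fin n → ℝ) → Matrix (Fin n) (Fin n) ℝ) := by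
  change IsExtreme ℝ (orthOrbitHull d) F at hF
  change _ = _ ∩ orthOrbitHull d ∧ _
  set K := (fun Y => k * Y * kᵀ) '' F
  have hK : IsExtreme ℝ (orthOrbitHull d) K := isExtreme_orthOrbitHull_conj_image hF hk
  have hfK : diagPart '' K ⊆ K := by
    refine hf.subset_convexHull_inter.trans
      (convexHull_min ?_ (hFconv.is_linear_image (isLinearMap_conj k)))
    rintro _ ⟨⟨Z, hZ, rfl⟩, σ, hσ⟩
    have hZdiag : (fun i => Z i i) = fun i => d (σ⁻¹ i) := diagonal_injective hσ
    have hsq : ∑ i, Z i i ^ 2 = ∑ i, d i ^ 2 := by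
      rw [← Equiv.sum_comp σ⁻¹ fun i => d i ^ 2]
      exact congrArg (fun v => ∑ i, v i ^ 2) hZdiag
    rw [eq_diagonal_diag_of_mem_orthOrbitHull (hK.subset hZ) hsq] at hZ
    exact hZ
  refine ⟨Set.Subset.antisymm (fun Y hY => ⟨⟨Y, hY, rfl⟩, hK.subset hY⟩)
      fun Y ⟨hYf, hYO⟩ => ?_, Set.Subset.antisymm (fun x hx => ⟨hfK hx, ?_⟩) ?_⟩
  · exact hK.mem_of_diagonal_diag_mem (convex_convexHull ℝ _)
      (fun s _ => signDiagonal_conj_mem_orthOrbitHull s) hYO (hfK hYf)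
  · obtain ⟨Z, -, rfl⟩ := hx
    exact ⟨_, rfl⟩
  · rintro _ ⟨hx, v, rfl⟩
    exact ⟨diagonal v, hx, by simp [diagPart]⟩

/-- for `X = diagonal d`, `O_X = convexHull {g X gᵀ : g ∈ O(n)}` and
`Π_X = convexHull {σ·X : σ ∈ S_n}`, if `F` is a face of `O_X` and `k ∈ O(n)` is such that
`f := P({k Y kᵀ : Y ∈ F})` is a face of `Π_X`, then `{k Y kᵀ : Y ∈ F} = P⁻¹(f) ∩ O_X` and
`f = {k Y kᵀ : Y ∈ F} ∩ {diagonal matrices}`. -/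
theorem conj_face_eq_preimage_inter
    {n : ℕ} (d : Fin n → ℝ)
    (F : Set (Matrix (Fin n) (Fin n) ℝ)) (hFconv : Convex ℝ F)
    (hF : IsExtreme ℝ (convexHull ℝ {m : Matrix (Fin n) (Fin n) ℝ |
        ∃ g ∈ Matrix.orthogonalGroup (Fin n) ℝ, m = g * Matrix.diagonal d * gᵀ}) F)
    (k : Matrix (Fin n) (Fin n) ℝ) (hk : k ∈ Matrix.orthogonalGroup (Fin n) ℝ)
    (hfconv : Convex ℝ (diagPart '' ((fun Y => k * Y * kᵀ) '' F)))
    (hf : IsExtreme ℝ (convexHull ℝ {m : Matrix (Fin n) (Fin n) ℝ |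
        ∃ σ : Equiv.Perm (Fin n), m = Matrix.diagonal (fun i => d (σ⁻¹ i))})
      (diagPart '' ((fun Y => k * Y * kᵀ) '' F))) :
    (fun Y => k * Y * kᵀ) '' F =
        diagPart ⁻¹' (diagPart '' ((fun Y => k * Y * kᵀ) '' F)) ∩
          convexHull ℝ {m : Matrix (Fin n) (Fin n) ℝ |
            ∃ g ∈ Matrix.orthogonalGroup (Fin n) ℝ, m = g * Matrix.diagonal d * gᵀ} ∧
      diagPart '' ((fun Y => k * Y * kᵀ) '' F) =
        ((fun Y => k * Y * kᵀ) '' F) ∩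
          Set.range (Matrix.diagonal : (Fin n → ℝ) → Matrix (Fin n) (Fin n) ℝ) :=
  conj_face_eq_preimage_inter_general d F hFconv hF k hk hf
end
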